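/- arXiv:1610.09631 — 2 statements merged into one kernel-verified Lean document; each statement's English description precedes it below -/
import Mathlib

section
/- Let n ≥ 2 be an even integer, and let a, b, σ, ρ be reals with a > 0, σ > 0, and ρ/σ ≤ (n+2)/2 ≤ b/a. Fix t ∈ [0, a/σ) and set a(t) = a - σt, b(t) = b - ρt. Let l be an integer with 0 ≤ l ≤ (n-2)/2, and let k be an integer such that the number D := k(b(t) - a(t)) - l·b(t) is strictly positive. Then k ≥ l + 1 and moreover D ≥ a(t). -/
/-! With `A = a(t)` and `B = b(t)`, the hypotheses give `B ≥ (n+2)/2 · A ≥ (l+2)·A`, so `B - A > 0`.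
If `k ≤ l` then `D ≤ l(B - A) - lB = -lA ≤ 0`; hence `k ≥ l + 1` and
`D ≥ (l+1)(B - A) - lB = B - (l+1)A ≥ A`. -/

lemma sub_mul_pos_of_lt_div {a σ t : ℝ} (hσ : 0 < σ) (ht : t < a / σ) : 0 < a - σ * t := by
  have := (lt_div_iff₀ hσ).mp ht
  linarith

lemma mul_sub_mul_le_sub_mul {a b σ ρ m t : ℝ} (ha : 0 < a) (hσ : 0 < σ)
    (hρ : ρ / σ ≤ m) (hb : m ≤ b / a) (ht : 0 ≤ t) : m * (a - σ * t) ≤ b - ρ * t := by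
  have hb' : m * a ≤ b := (le_div_iff₀ ha).mp hb
  have hρ' : ρ ≤ m * σ := (div_le_iff₀ hσ).mp hρ
  nlinarith [mul_le_mul_of_nonneg_right hρ' ht]

section IntegerCombination

variable {A B : ℝ} {l k : ℤ}

lemma add_one_le_of_pos_mul_sub_sub_mul (hA : 0 < A) (hl : 0 ≤ l)
    (hAB : A < B) (hD : 0 < (k : ℝ) * (B - A) - l * B) : l + 1 ≤ k := by
  by_contra! hk
  have hkl : (k : ℝ) ≤ l := by exact_mod_cast Int.lt_add_one_iff.mp hk
  have hl' : (0 : ℝ) ≤ l := by exact_mod_cast hl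
  nlinarith [mul_le_mul_of_nonneg_right hkl (sub_nonneg.mpr hAB.le)]

lemma le_mul_sub_sub_mul_of_pos (hA : 0 < A) (hl : 0 ≤ l)
    (hB : ((l : ℝ) + 2) * A ≤ B) (hD : 0 < (k : ℝ) * (B - A) - l * B) :
    l + 1 ≤ k ∧ A ≤ (k : ℝ) * (B - A) - l * B := by
  have hl' : (0 : ℝ) ≤ l := by exact_mod_cast hl
  have hAB : A < B := by nlinarith
  have hk := add_one_le_of_pos_mul_sub_sub_mul hA hl hAB hD
  have hk' : (l : ℝ) + 1 ≤ k := by exact_mod_cast hk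
  refine ⟨hk, ?_⟩
  calc A ≤ B - (l + 1) * A := by linarith
    _ = (l + 1) * (B - A) - l * B := by ring
    _ ≤ k * (B - A) - l * B := by gcongr

end IntegerCombination

theorem stmt3_general (n : ℕ)
    (a b σ ρ : ℝ) (ha : 0 < a) (hσ : 0 < σ)
    (h1 : ρ / σ ≤ ((n : ℝ) + 2) / 2) (h2 : ((n : ℝ) + 2) / 2 ≤ b / a)
    (t : ℝ) (ht0 : 0 ≤ t) (ht1 : t < a / σ)
    (l k : ℤ) (hl0 : 0 ≤ l) (hl1 : (l : ℝ) ≤ ((n : ℝ) - 2) / 2)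
    (hD : 0 < (k : ℝ) * ((b - ρ * t) - (a - σ * t)) - (l : ℝ) * (b - ρ * t)) :
    l + 1 ≤ k ∧
      a - σ * t ≤ (k : ℝ) * ((b - ρ * t) - (a - σ * t)) - (l : ℝ) * (b - ρ * t) := by
  have hA : 0 < a - σ * t := sub_mul_pos_of_lt_div hσ ht1
  have hB := mul_sub_mul_le_sub_mul ha hσ h1 h2 ht0
  have hlB : ((l : ℝ) + 2) * (a - σ * t) ≤ b - ρ * t :=
    le_trans (mul_le_mul_of_nonneg_right (by linarith) hA.le) hB
  exact le_mul_sub_sub_mul_of_pos hA hl0 hlB hD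

/-- Area estimate excluding Maslov index `-2l` disks: with `a > 0`, `σ > 0`,
`ρ/σ ≤ (n+2)/2 ≤ b/a` (`n ≥ 2` even), `t ∈ [0, a/σ)`, `a(t) = a - σt`,
`b(t) = b - ρt`, `0 ≤ l ≤ (n-2)/2`, and `k` an integer with
`D = k(b(t) - a(t)) - l·b(t) > 0`, one has `k ≥ l + 1` and `D ≥ a(t)`. -/
theorem stmt3 (n : ℕ) (hn_even : Even n) (hn : 2 ≤ n)
    (a b σ ρ : ℝ) (ha : 0 < a) (hσ : 0 < σ)
    (h1 : ρ / σ ≤ ((n : ℝ) + 2) / 2) (h2 : ((n : ℝ) + 2) / 2 ≤ b / a)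
    (t : ℝ) (ht0 : 0 ≤ t) (ht1 : t < a / σ)
    (l k : ℤ) (hl0 : 0 ≤ l) (hl1 : (l : ℝ) ≤ ((n : ℝ) - 2) / 2)
    (hD : 0 < (k : ℝ) * ((b - ρ * t) - (a - σ * t)) - (l : ℝ) * (b - ρ * t)) :
    l + 1 ≤ k ∧
      a - σ * t ≤ (k : ℝ) * ((b - ρ * t) - (a - σ * t)) - (l : ℝ) * (b - ρ * t) :=
  stmt3_general n a b σ ρ ha hσ h1 h2 t ht0 ht1 l k hl0 hl1 hD
end

section
/- Let (M, ω) be a symplectic manifold of dimension 2n and let F, G : M → ℝ be smooth functions. Then dF ∧ dG ∧ ω^{n-1} = -(1/n)·{F, G}·ωⁿ, where {F,G} is the Poisson bracket defined by {F,G} = ω(sgrad G, sgrad F) with i_{sgrad H} ω = -dH. Consequently, for the 2-form ω_t := ω + t·dF ∧ dG one has ω_tⁿ = (1 - t{F,G})·ωⁿ; in particular ω_t is nondegenerate at every point where t·{F,G} < 1. -/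
/-!
The 2-forms `wᵢ = eᵢ ∧ fᵢ` commute and square to zero, so `ωᵏ = k! Σ_{|T| = k} ∏_{i ∈ T} wᵢ`.
Each term of `ωⁿ⁻¹` misses exactly one plane `m`, and it annihilates every component of `dF`
and `dG` in the other planes; hence `dF ∧ dG ∧ ∏_{i ≠ m} wᵢ = (aₘdₘ - bₘcₘ) ∏ᵢ wᵢ`, and summing
over `m` gives `n · dF ∧ dG ∧ ωⁿ⁻¹ = -{F,G} ωⁿ`. Since `D = dF ∧ dG` commutes with `ω` and
`D² = 0`, the binomial formula collapses to `(ω + tD)ⁿ = ωⁿ + n t D ωⁿ⁻¹`.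
-/

open Finset ExteriorAlgebra
open scoped Nat

theorem Finset.sum_powersetCard_succ_insert {α β : Type*} [DecidableEq α] [AddCommMonoid β]
    {s : Finset α} {a : α} (ha : a ∉ s) (k : ℕ) (f : Finset α → β) :
    ∑ T ∈ (insert a s).powersetCard (k + 1), f T =
      ∑ T ∈ s.powersetCard (k + 1), f T + ∑ T ∈ s.powersetCard k, f (insert a T) := by
  rw [powersetCard_succ_insert ha, sum_union, sum_image]
  · exact insert_erase_invOn.2.injOn.mono fun T hT ↦ notMem_mono (mem_powersetCard.1 hT).1 ha
  · aesop (add simp [disjoint_left, insert_subset_iff, mem_powersetCard])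

theorem Finset.powersetCard_card_sub_one {α : Type*} [DecidableEq α] {s : Finset α}
    (hs : s.Nonempty) : s.powersetCard (#s - 1) = s.image s.erase := by
  ext T
  simp only [mem_powersetCard, mem_image]
  constructor
  · rintro ⟨hTs, hT⟩
    obtain ⟨m, hms, hmT⟩ := exists_of_ssubset (ssubset_of_subset_of_ne hTs (by
      rintro rfl; have := hs.card_pos; omega))
    refine ⟨m, hms, (eq_of_subset_of_card_le (subset_erase.2 ⟨hTs, hmT⟩) ?_).symm⟩
    rw [card_erase_of_mem hms, hT]
  · rintro ⟨m, hm, rfl⟩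
    exact ⟨erase_subset _ _, card_erase_of_mem hm⟩

section Ring

variable {A : Type*} [Ring A]

theorem Commute.add_pow_of_mul_self_eq_zero {x y : A} (h : Commute x y) (hy : y * y = 0)
    (n : ℕ) : (x + y) ^ n = x ^ n + n • (y * x ^ (n - 1)) := by
  induction n with
  | zero => simp
  | succ k ih =>
    have hyxy : y * x ^ (k - 1) * y = 0 := by
      rw [mul_assoc, (h.pow_left _).eq, ← mul_assoc, hy, zero_mul]
    have hyxx : k • (y * x ^ (k - 1) * x) = k • (y * x ^ k) := by
      cases k <;> simp [mul_assoc, pow_succ]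
    rw [pow_succ, ih, add_mul, mul_add, mul_add, smul_mul_assoc, smul_mul_assoc, hyxy, smul_zero,
      add_zero, hyxx, ← pow_succ, (h.pow_left k).eq, Nat.add_sub_cancel, succ_nsmul]
    abel

variable {κ : Type*} [DecidableEq κ] {w : κ → A} (hc : ∀ i j, Commute (w i) (w j))
  (hw : ∀ i, w i * w i = 0)
include hc hw

theorem Finset.sum_pow_eq_factorial_smul_sum_noncommProd (s : Finset κ) (k : ℕ) :
    (∑ i ∈ s, w i) ^ k =
      k ! • ∑ T ∈ s.powersetCard k, T.noncommProd w fun i _ j _ _ ↦ hc i j := by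
  induction s using Finset.induction_on generalizing k with
  | empty =>
    rcases k with _ | k
    · simp only [pow_zero, Nat.factorial_zero, one_smul, powersetCard_zero, sum_singleton]; rfl
    · rw [powersetCard_eq_empty.2 (by simp)]; simp
  | insert j s hj ih =>
    cases k with
    | zero =>
      simp only [pow_zero, Nat.factorial_zero, one_smul, powersetCard_zero, sum_singleton]; rfl
    | succ k =>
      have hcomm : Commute (∑ i ∈ s, w i) (w j) := .sum_left _ _ _ fun i _ ↦ hc i j
      have hins : ∀ T ∈ s.powersetCard k, (insert j T).noncommProd w (fun i _ j _ _ ↦ hc i j) =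
          w j * T.noncommProd w fun i _ j _ _ ↦ hc i j := fun T hT ↦
        noncommProd_insert_of_notMem _ _ _ _ fun h ↦ hj ((mem_powersetCard.1 hT).1 h)
      rw [sum_insert hj, add_comm, hcomm.add_pow_of_mul_self_eq_zero (hw j), ih, ih,
        Nat.add_sub_cancel, sum_powersetCard_succ_insert hj, sum_congr rfl hins, ← mul_sum,
        mul_smul_comm, smul_smul, ← Nat.factorial_succ, smul_add]

theorem Finset.sum_pow_card_eq_factorial_smul_noncommProd (s : Finset κ) :
    (∑ i ∈ s, w i) ^ #s = (#s)! • s.noncommProd w fun i _ j _ _ ↦ hc i j := by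
  rw [sum_pow_eq_factorial_smul_sum_noncommProd hc hw, powersetCard_self, sum_singleton]

theorem Finset.sum_pow_card_sub_one_eq_factorial_smul_sum_noncommProd_erase {s : Finset κ}
    (hs : s.Nonempty) : (∑ i ∈ s, w i) ^ (#s - 1) =
      (#s - 1)! • ∑ m ∈ s, (s.erase m).noncommProd w fun i _ j _ _ ↦ hc i j := by
  rw [sum_pow_eq_factorial_smul_sum_noncommProd hc hw, powersetCard_card_sub_one hs,
    sum_image s.erase_injOn]

end Ring

namespace ExteriorAlgebra

variable {R M : Type*} [CommRing R] [AddCommGroup M] [Module R M]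

theorem ι_mul_ι_swap (x y : M) : ι R y * ι R x = -(ι R x * ι R y) :=
  eq_neg_of_add_eq_zero_left (ι_add_mul_swap y x)

theorem commute_ι_mul_ι_ι (u v x : M) : Commute (ι R u * ι R v) (ι R x) := by
  rw [commute_iff_eq, mul_assoc, ι_mul_ι_swap x v, mul_neg, ← mul_assoc, ι_mul_ι_swap x u,
    neg_mul, neg_neg, mul_assoc]

theorem commute_ι_mul_ι (u v x y : M) : Commute (ι R u * ι R v) (ι R x * ι R y) :=
  (commute_ι_mul_ι_ι u v x).mul_right (commute_ι_mul_ι_ι u v y)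

theorem ι_mul_ι_mul_self (u v : M) : ι R u * ι R v * (ι R u * ι R v) = 0 := by
  rw [← mul_assoc, (commute_ι_mul_ι_ι u v u).eq, ← mul_assoc, ι_sq_zero, zero_mul, zero_mul]

theorem ι_smul_add_smul_mul_ι_smul_add_smul (a b c d : R) (u v : M) :
    ι R (a • u + b • v) * ι R (c • u + d • v) = (a * d - b * c) • (ι R u * ι R v) := by
  simp only [map_add, map_smul, add_mul, mul_add, smul_mul_smul_comm, ι_sq_zero, smul_zero,
    zero_add, add_zero, ι_mul_ι_swap u v]
  module

theorem ι_smul_add_smul_mul_ι_mul_ι (a b : R) (u v : M) :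
    ι R (a • u + b • v) * (ι R u * ι R v) = 0 := by
  rw [map_add, map_smul, map_smul, add_mul, smul_mul_assoc, smul_mul_assoc, ← mul_assoc,
    ι_sq_zero, zero_mul, ← (commute_ι_mul_ι_ι u v v).eq, mul_assoc, ι_sq_zero, mul_zero,
    smul_zero, smul_zero, add_zero]


section Frame

variable {κ : Type*} (e f : κ → M)

variable (R) in
def pairProd (s : Finset κ) : ExteriorAlgebra R M :=
  s.noncommProd (fun i ↦ ι R (e i) * ι R (f i)) fun _ _ _ _ _ ↦ commute_ι_mul_ι _ _ _ _

theorem commute_ι_pairProd (x : M) (s : Finset κ) : Commute (ι R x) (pairProd R e f s) :=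
  noncommProd_commute _ _ _ _ fun _ _ ↦ (commute_ι_mul_ι_ι _ _ x).symm

theorem mul_pairProd_erase [DecidableEq κ] {s : Finset κ} {m : κ} (hm : m ∈ s) :
    ι R (e m) * ι R (f m) * pairProd R e f (s.erase m) = pairProd R e f s :=
  mul_noncommProd_erase _ hm (fun i ↦ ι R (e i) * ι R (f i)) _

theorem ι_smul_add_smul_mul_pairProd [DecidableEq κ] {s : Finset κ} {i : κ} (hi : i ∈ s) (a b : R) :
    ι R (a • e i + b • f i) * pairProd R e f s = 0 := by
  rw [← mul_pairProd_erase e f hi, ← mul_assoc, ι_smul_add_smul_mul_ι_mul_ι, zero_mul]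

theorem ι_sum_mul_pairProd_erase [Fintype κ] [DecidableEq κ] (a b : κ → R) (m : κ) :
    ι R (∑ i, (a i • e i + b i • f i)) * pairProd R e f (univ.erase m) =
      ι R (a m • e m + b m • f m) * pairProd R e f (univ.erase m) := by
  rw [map_sum, sum_mul]
  refine sum_eq_single m (fun i _ hi ↦ ?_) (by simp)
  exact ι_smul_add_smul_mul_pairProd e f (mem_erase.2 ⟨hi, mem_univ i⟩) _ _

theorem ι_mul_ι_mul_pairProd_erase [Fintype κ] [DecidableEq κ] (a b c d : κ → R) (m : κ) :
    ι R (∑ i, (a i • e i + b i • f i)) * ι R (∑ i, (c i • e i + d i • f i)) *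
      pairProd R e f (univ.erase m) = (a m * d m - b m * c m) • pairProd R e f univ := by
  set x := ∑ i, (a i • e i + b i • f i)
  set y := ∑ i, (c i • e i + d i • f i)
  set P := pairProd R e f (univ.erase m)
  calc ι R x * ι R y * P = ι R x * P * ι R y := by
        rw [mul_assoc, (commute_ι_pairProd e f y _).eq, mul_assoc]
    _ = ι R (a m • e m + b m • f m) * (ι R y * P) := by
        rw [ι_sum_mul_pairProd_erase, mul_assoc, (commute_ι_pairProd e f y _).eq]
    _ = ι R (a m • e m + b m • f m) * ι R (c m • e m + d m • f m) * P := by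
        rw [ι_sum_mul_pairProd_erase, mul_assoc]
    _ = (a m * d m - b m * c m) • pairProd R e f univ := by
        rw [ι_smul_add_smul_mul_ι_smul_add_smul, smul_mul_assoc,
          mul_pairProd_erase e f (mem_univ m)]

variable [Fintype κ] [DecidableEq κ]

theorem sum_ι_mul_ι_pow_card :
    (∑ i, ι R (e i) * ι R (f i)) ^ Fintype.card κ = (Fintype.card κ)! • pairProd R e f univ := by
  rw [← card_univ]
  exact sum_pow_card_eq_factorial_smul_noncommProd (fun _ _ ↦ commute_ι_mul_ι _ _ _ _)
    (fun _ ↦ ι_mul_ι_mul_self _ _) univ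

theorem sum_ι_mul_ι_pow_card_sub_one [Nonempty κ] :
    (∑ i, ι R (e i) * ι R (f i)) ^ (Fintype.card κ - 1) =
      (Fintype.card κ - 1)! • ∑ m, pairProd R e f (univ.erase m) := by
  rw [← card_univ]
  exact sum_pow_card_sub_one_eq_factorial_smul_sum_noncommProd_erase
    (fun _ _ ↦ commute_ι_mul_ι _ _ _ _) (fun _ ↦ ι_mul_ι_mul_self _ _) univ_nonempty

theorem card_smul_ι_mul_ι_mul_sum_ι_mul_ι_pow_card_sub_one [Nonempty κ] (a b c d : κ → R) :
    Fintype.card κ • (ι R (∑ i, (a i • e i + b i • f i)) * ι R (∑ i, (c i • e i + d i • f i)) *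
      (∑ i, ι R (e i) * ι R (f i)) ^ (Fintype.card κ - 1)) =
    (∑ i, (a i * d i - b i * c i)) • (∑ i, ι R (e i) * ι R (f i)) ^ Fintype.card κ := by
  rw [sum_ι_mul_ι_pow_card_sub_one, sum_ι_mul_ι_pow_card, mul_smul_comm, mul_sum,
    sum_congr rfl fun m _ ↦ ι_mul_ι_mul_pairProd_erase e f a b c d m, ← sum_smul, smul_smul,
    Nat.mul_factorial_pred Fintype.card_ne_zero, smul_comm]

end Frame

end ExteriorAlgebra

/-- Pointwise version of `dF ∧ dG ∧ ω^{n-1} = -(1/n)·{F,G}·ωⁿ` in Darboux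
coordinates: in the exterior algebra of the space `W` of covectors at a point of
a `2n`-dimensional symplectic manifold, with `ω = Σ dpᵢ ∧ dqᵢ`,
`dF = Σ aᵢ dpᵢ + bᵢ dqᵢ`, `dG = Σ cᵢ dpᵢ + dᵢ dqᵢ`, and Poisson bracket
`{F,G} = dF(sgrad G) = Σ (bᵢcᵢ - aᵢdᵢ)` (convention `i_{sgrad H} ω = -dH`),
one has `dF ∧ dG ∧ ω^{n-1} = -(1/n)·{F,G}·ωⁿ`; consequently, for
`ω_t = ω + t·dF ∧ dG`, `ω_tⁿ = (1 - t·{F,G})·ωⁿ`, which is nonzero (i.e. `ω_t`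
is nondegenerate) wherever `t·{F,G} < 1`, provided `ωⁿ ≠ 0`. -/
theorem stmt6 (n : ℕ) (hn : 0 < n) (W : Type*) [AddCommGroup W] [Module ℝ W]
    (e f : Fin n → W) (a b c d : Fin n → ℝ) (t : ℝ)
    (ω dF dG : ExteriorAlgebra ℝ W) (pb : ℝ)
    (hω : ω = ∑ i, ι ℝ (e i) * ι ℝ (f i))
    (hdF : dF = ∑ i, (a i • ι ℝ (e i) + b i • ι ℝ (f i)))
    (hdG : dG = ∑ i, (c i • ι ℝ (e i) + d i • ι ℝ (f i)))
    (hpb : pb = ∑ i, (b i * c i - a i * d i)) :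
    dF * dG * ω ^ (n - 1) = (-(1 / (n : ℝ)) * pb) • ω ^ n ∧
    (ω + t • (dF * dG)) ^ n = (1 - t * pb) • ω ^ n ∧
    (t * pb < 1 → ω ^ n ≠ 0 → (ω + t • (dF * dG)) ^ n ≠ 0) := by
  have : Nonempty (Fin n) := ⟨⟨0, hn⟩⟩
  set x := ∑ i, (a i • e i + b i • f i)
  set y := ∑ i, (c i • e i + d i • f i)
  have hx : dF = ι ℝ x := by simp [x, hdF]
  have hy : dG = ι ℝ y := by simp [y, hdG]
  have hkey : n • (dF * dG * ω ^ (n - 1)) = (-pb) • ω ^ n := by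
    have h := card_smul_ι_mul_ι_mul_sum_ι_mul_ι_pow_card_sub_one e f a b c d
    rw [Fintype.card_fin] at h
    rw [hω, hx, hy, h, hpb, ← sum_neg_distrib]
    congr 2; ext i; ring
  have hsq : t • (dF * dG) * (t • (dF * dG)) = 0 := by
    rw [smul_mul_smul_comm, hx, hy, ι_mul_ι_mul_self, smul_zero]
  have hcomm : Commute ω (t • (dF * dG)) := by
    rw [hω, hx, hy]
    exact .smul_right (.sum_left _ _ _ fun i _ ↦ commute_ι_mul_ι _ _ _ _) t
  have hpow : (ω + t • (dF * dG)) ^ n = (1 - t * pb) • ω ^ n := by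
    rw [hcomm.add_pow_of_mul_self_eq_zero hsq, smul_mul_assoc, smul_comm, hkey, smul_smul]
    module
  refine ⟨?_, hpow, fun hlt hne ↦ hpow ▸ smul_ne_zero (sub_pos.2 hlt).ne' hne⟩
  have hn0 : (n : ℝ) ≠ 0 := Nat.cast_ne_zero.2 hn.ne'
  calc dF * dG * ω ^ (n - 1) = (n : ℝ)⁻¹ • (n : ℝ) • (dF * dG * ω ^ (n - 1)) :=
        (inv_smul_smul₀ hn0 _).symm
    _ = (-(1 / (n : ℝ)) * pb) • ω ^ n := by
        rw [Nat.cast_smul_eq_nsmul, hkey, smul_smul]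
        congr 1
        ring
end
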